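/- arXiv:2403.10958 — 2 statements merged into one kernel-verified Lean document; each statement's English description precedes it below -/
import Mathlib

section
/- A persistent sheaf of finite type on a finite poset X is equivalent to a sheaf of finitely generated N_0-graded k[t]-modules on X: the category of functors N_0 → Shv(X, vec) of finite type is equivalent to Shv(X, grMod_{k[t]}). -/
open CategoryTheory

/-! Persistent sheaves on a finite poset and sheaves of graded `k[t]`-modules.
A sheaf on a finite poset `X` valued in a category `C` is a functor `X ⥤ C`. -/

/-- An `ℕ`-graded `k[t]`-module, given by its graded pieces and the action of `t`. -/
structure GrMod (k : Type) [Field k] where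
  piece : ℕ → Type
  [grp : ∀ n, AddCommGroup (piece n)]
  [mod : ∀ n, Module k (piece n)]
  act : ∀ n, piece n →ₗ[k] piece (n + 1)

attribute [instance] GrMod.grp GrMod.mod

variable {k : Type} [Field k]

/-- Iterated action of `t`, raising the degree by `j`. -/
noncomputable def GrMod.actIterAux (M : GrMod k) (a : ℕ) :
    (j : ℕ) → (M.piece a →ₗ[k] M.piece (a + j))
  | 0 => LinearMap.id
  | j + 1 => (M.act (a + j)) ∘ₗ (M.actIterAux a j)

/-- Iterated action of `t` from degree `a` to degree `b ≥ a`. -/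
noncomputable def GrMod.actIter (M : GrMod k) (a b : ℕ) (h : a ≤ b) :
    M.piece a →ₗ[k] M.piece b :=
  (Nat.add_sub_cancel' h) ▸ (M.actIterAux a (b - a))

/-- Finite generation of a graded `k[t]`-module. -/
def GrMod.FG (M : GrMod k) : Prop :=
  ∃ s : Finset (Σ n : ℕ, M.piece n), ∀ (m : ℕ) (x : M.piece m),
    x ∈ Submodule.span k
      {y : M.piece m | ∃ g ∈ s, ∃ h : g.1 ≤ m, M.actIter g.1 m h g.2 = y}

instance : Category (GrMod k) where
  Hom M N := {φ : ∀ n, M.piece n →ₗ[k] N.piece n //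
    ∀ n, (N.act n) ∘ₗ (φ n) = (φ (n + 1)) ∘ₗ (M.act n)}
  id M := ⟨fun _ => LinearMap.id, by intro n; simp⟩
  comp φ ψ := ⟨fun n => (ψ.1 n) ∘ₗ (φ.1 n), by
    intro n
    rw [← LinearMap.comp_assoc, ψ.2 n, LinearMap.comp_assoc, φ.2 n, LinearMap.comp_assoc]⟩
  id_comp φ := by apply Subtype.ext; funext n; rfl
  comp_id φ := by apply Subtype.ext; funext n; rfl
  assoc φ ψ χ := by apply Subtype.ext; funext n; rfl

/-- A persistent sheaf (functor `ℕ ⥤ Shv(X, vec)`) is of finite type if its structure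
maps are eventually isomorphisms. -/
def FiniteTypeShv (X : Type) [PartialOrder X] (F : ℕ ⥤ (X ⥤ FGModuleCat k)) : Prop :=
  ∃ m : ℕ, ∀ i j : ℕ, ∀ h : i ≤ j, m ≤ i → IsIso (F.map h.hom)

/-!
A graded `k[t]`-module with finite-dimensional pieces is the same thing as a functor
`ℕ ⥤ FGModuleCat k`: the piece of degree `n` sits at `n` and multiplication by `t` is the map
`n ⟶ n + 1`. Under this dictionary finite generation is finite type. If the generators have
degree `≤ m`, the maps out of degrees `≥ m` are surjective, so the dimensions are eventually
antitone, hence eventually constant, and the maps eventually bijective. Conversely, if all maps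
from degree `m` on are isomorphisms, spanning sets of the pieces of degree `≤ m` generate.
Sheaves on `X` are then handled by swapping the two arguments of `ℕ ⥤ X ⥤ _`; finiteness of
`X` provides a common index from which all stalks are constant.
-/

open Filter in
lemma LinearMap.eventually_bijective_of_eventually_surjective {V : ℕ → Type*}
    [∀ n, AddCommGroup (V n)] [∀ n, Module k (V n)] [∀ n, Module.Finite k (V n)]
    (f : ∀ n, V n →ₗ[k] V (n + 1)) (hf : ∀ᶠ n in atTop, Function.Surjective (f n)) :
    ∀ᶠ n in atTop, Function.Bijective (f n) := by
  obtain ⟨m, hm⟩ := eventually_atTop.mp hf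
  have hanti : Antitone fun i => Module.finrank k (V (m + i)) :=
    antitone_nat_of_succ_le fun i => LinearMap.finrank_le_finrank_of_surjective (hm _ le_self_add)
  obtain ⟨i₀, hi₀⟩ := WellFoundedLT.antitone_chain_condition hanti
  refine eventually_atTop.mpr ⟨m + i₀, fun n hn => ?_⟩
  obtain ⟨i, rfl⟩ := Nat.exists_eq_add_of_le (le_of_add_le_left hn)
  have hdim : Module.finrank k (V (m + i)) = Module.finrank k (V (m + i + 1)) :=
    (hi₀ i (by omega)).symm.trans (hi₀ (i + 1) (by omega))
  exact ⟨(LinearMap.injective_iff_surjective_of_finrank_eq_finrank hdim).mpr (hm _ le_self_add),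
    hm _ le_self_add⟩

namespace GrMod

lemma actIter_self_add (M : GrMod k) (a j : ℕ) (h : a ≤ a + j) :
    M.actIter a (a + j) h = M.actIterAux a j := by
  have key : ∀ (i : ℕ) (e : a + i = a + j),
      (e ▸ M.actIterAux a i : M.piece a →ₗ[k] M.piece (a + j)) = M.actIterAux a j := by
    rintro i e
    obtain rfl : i = j := by omega
    rfl
  exact key _ _

@[simp]
lemma actIter_self (M : GrMod k) (a : ℕ) (h : a ≤ a) : M.actIter a a h = LinearMap.id :=
  M.actIter_self_add a 0 h

lemma actIter_succ (M : GrMod k) {a b : ℕ} (h : a ≤ b) (h' : a ≤ b + 1) :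
    M.actIter a (b + 1) h' = M.act b ∘ₗ M.actIter a b h := by
  obtain ⟨j, rfl⟩ := Nat.exists_eq_add_of_le h
  exact (M.actIter_self_add a (j + 1) h').trans (by rw [M.actIter_self_add a j h]; rfl)

@[simp]
lemma actIter_succ_self (M : GrMod k) (n : ℕ) (h : n ≤ n + 1) :
    M.actIter n (n + 1) h = M.act n := by
  rw [M.actIter_succ le_rfl, actIter_self, LinearMap.comp_id]

lemma actIter_trans (M : GrMod k) {a b c : ℕ} (hab : a ≤ b) (hbc : b ≤ c) :
    M.actIter a c (hab.trans hbc) = M.actIter b c hbc ∘ₗ M.actIter a b hab := by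
  induction c, hbc using Nat.le_induction with
  | base => simp
  | succ c hbc ih =>
    rw [M.actIter_succ (hab.trans hbc), M.actIter_succ hbc, ih, LinearMap.comp_assoc]

lemma actIter_comp_hom {M N : GrMod k} (φ : M ⟶ N) {a b : ℕ} (h : a ≤ b) :
    N.actIter a b h ∘ₗ φ.1 a = φ.1 b ∘ₗ M.actIter a b h := by
  induction b, h using Nat.le_induction with
  | base => simp
  | succ b hb ih =>
    rw [N.actIter_succ hb, M.actIter_succ hb, LinearMap.comp_assoc, ih,
      ← LinearMap.comp_assoc, φ.2 b, LinearMap.comp_assoc]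

lemma bijective_actIter {M : GrMod k} {m : ℕ}
    (hm : ∀ n, m ≤ n → Function.Bijective (M.act n)) {a b : ℕ} (h : a ≤ b)
    (ha : m ≤ a) : Function.Bijective (M.actIter a b h) := by
  induction b, h using Nat.le_induction with
  | base => rw [actIter_self]; exact Function.bijective_id
  | succ b hb ih =>
    rw [M.actIter_succ hb]
    exact (hm b (ha.trans hb)).comp ih

section FG

open Filter

variable {M : GrMod k}

lemma FG.finite_piece (hM : M.FG) (n : ℕ) : Module.Finite k (M.piece n) := by
  classical
  obtain ⟨s, hs⟩ := hM
  let f : (Σ m, M.piece m) → M.piece n := fun g =>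
    if h : g.1 ≤ n then M.actIter g.1 n h g.2 else 0
  have hfinite : {y | ∃ g ∈ s, ∃ h : g.1 ≤ n, M.actIter g.1 n h g.2 = y}.Finite := by
    refine (s.finite_toSet.image f).subset ?_
    rintro _ ⟨g, hg, h, rfl⟩
    exact ⟨g, hg, dif_pos h⟩
  rw [Module.finite_def, ← eq_top_iff.mpr fun x _ => hs n x]
  exact Submodule.fg_span hfinite

lemma FG.eventually_surjective_act (hM : M.FG) :
    ∀ᶠ n in atTop, Function.Surjective (M.act n) := by
  obtain ⟨s, hs⟩ := hM
  refine eventually_atTop.mpr ⟨s.sup Sigma.fst, fun n hn x => ?_⟩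
  refine (Submodule.span_le (p := LinearMap.range (M.act n))).mpr ?_ (hs (n + 1) x)
  rintro _ ⟨g, hg, -, rfl⟩
  rw [M.actIter_succ (le_trans (Finset.le_sup hg) hn)]
  exact ⟨_, rfl⟩

lemma FG.exists_bijective_actIter (hM : M.FG) :
    ∃ m, ∀ a b (h : a ≤ b), m ≤ a → Function.Bijective (M.actIter a b h) := by
  have := hM.finite_piece
  obtain ⟨m, hm⟩ := eventually_atTop.mp
    (LinearMap.eventually_bijective_of_eventually_surjective M.act hM.eventually_surjective_act)
  exact ⟨m, fun a b h ha => bijective_actIter hm h ha⟩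

lemma fg_of_surjective_actIter (hfin : ∀ n, Module.Finite k (M.piece n)) {m : ℕ}
    (hsurj : ∀ n (h : m ≤ n), Function.Surjective (M.actIter m n h)) : M.FG := by
  classical
  choose S hS using fun n => Module.finite_def.mp (hfin n)
  refine ⟨(Finset.range (m + 1)).sigma S, fun n x => ?_⟩
  obtain ⟨a, ha, hn, y, rfl⟩ : ∃ a ≤ m, ∃ h : a ≤ n, ∃ y, M.actIter a n h y = x := by
    rcases le_total n m with hnm | hmn
    · exact ⟨n, hnm, le_rfl, x, by simp⟩
    · exact ⟨m, le_rfl, hmn, hsurj n hmn x⟩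
  have hy : M.actIter a n hn y ∈ Submodule.span k (M.actIter a n hn '' S a) := by
    rw [← Submodule.map_span, hS a]
    exact Submodule.mem_map_of_mem trivial
  refine Submodule.span_mono ?_ hy
  rintro _ ⟨z, hz, rfl⟩
  exact ⟨⟨a, z⟩, Finset.mem_sigma.mpr ⟨Finset.mem_range.mpr (Nat.lt_succ_of_le ha), hz⟩,
    hn, rfl⟩

end FG

section Persistence

def ofPersistence : (ℕ ⥤ FGModuleCat k) ⥤ GrMod k where
  obj G := { piece := fun n => G.obj n, act := fun n => (G.map (homOfLE n.le_succ)).hom.hom }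
  map η := ⟨fun n => (η.app n).hom.hom, fun n =>
    congrArg (fun f => f.hom.hom) (η.naturality (homOfLE n.le_succ)).symm⟩
  map_id _ := rfl
  map_comp _ _ := rfl

lemma ofPersistence_actIter (G : ℕ ⥤ FGModuleCat k) {a b : ℕ} (h : a ≤ b) :
    (ofPersistence.obj G).actIter a b h = (G.map (homOfLE h)).hom.hom := by
  induction b, h using Nat.le_induction with
  | base =>
    rw [actIter_self]
    exact congrArg (fun f => f.hom.hom) (G.map_id a).symm
  | succ b hb ih =>
    rw [actIter_succ _ hb, ih, ← homOfLE_comp hb b.le_succ, G.map_comp]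
    rfl

noncomputable def toPersistence (M : GrMod k) (hM : ∀ n, Module.Finite k (M.piece n)) :
    ℕ ⥤ FGModuleCat k where
  obj n := ⟨ModuleCat.of k (M.piece n), hM n⟩
  map f := ObjectProperty.homMk (ModuleCat.ofHom (M.actIter _ _ (leOfHom f)))
  map_id a := FGModuleCat.hom_ext (M.actIter_self a le_rfl)
  map_comp f g := FGModuleCat.hom_ext (M.actIter_trans (leOfHom f) (leOfHom g))

noncomputable def toPersistenceFunctor :
    ObjectProperty.FullSubcategory (fun M : GrMod k => M.FG) ⥤ (ℕ ⥤ FGModuleCat k) where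
  obj M := M.obj.toPersistence M.property.finite_piece
  map φ :=
    { app n := ObjectProperty.homMk (ModuleCat.ofHom (φ.hom.1 n))
      naturality _ _ f := FGModuleCat.hom_ext (actIter_comp_hom φ.hom (leOfHom f)).symm }

noncomputable def isoOfPersistenceToPersistence (M : GrMod k)
    (hM : ∀ n, Module.Finite k (M.piece n)) :
    M ≅ ofPersistence.obj (M.toPersistence hM) where
  hom := ⟨fun _ => LinearMap.id, fun n => by
    change M.actIter n (n + 1) n.le_succ ∘ₗ LinearMap.id = LinearMap.id ∘ₗ M.act n
    simp⟩
  inv := ⟨fun _ => LinearMap.id, fun n => by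
    change M.act n ∘ₗ LinearMap.id = LinearMap.id ∘ₗ M.actIter n (n + 1) n.le_succ
    simp⟩

noncomputable def toPersistenceOfPersistenceIso (G : ℕ ⥤ FGModuleCat k)
    (hG : ∀ n, Module.Finite k ((ofPersistence.obj G).piece n)) :
    (ofPersistence.obj G).toPersistence hG ≅ G :=
  NatIso.ofComponents (fun _ => Iso.refl _) fun f =>
    FGModuleCat.hom_ext (ofPersistence_actIter G (leOfHom f))

variable {M : GrMod k}

lemma isEventuallyConstant_toPersistence (hM : M.FG) :
    IsFiltered.IsEventuallyConstant (M.toPersistence hM.finite_piece) := by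
  obtain ⟨m, hm⟩ := hM.exists_bijective_actIter
  exact ⟨m, fun j f => (ConcreteCategory.isIso_iff_bijective _).mpr (hm m j (leOfHom f) le_rfl)⟩

lemma fg_ofPersistence {G : ℕ ⥤ FGModuleCat k} (hG : IsFiltered.IsEventuallyConstant G) :
    (ofPersistence.obj G).FG := by
  obtain ⟨m, hm⟩ := hG.exists_isEventuallyConstantFrom
  refine fg_of_surjective_actIter (fun n => inferInstanceAs (Module.Finite k (G.obj n))) (m := m)
    fun n h => ?_
  rw [ofPersistence_actIter]
  exact ((ConcreteCategory.isIso_iff_bijective _).mp (hm (homOfLE h))).2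

noncomputable def fgEquivIsEventuallyConstant :
    ObjectProperty.FullSubcategory (fun M : GrMod k => M.FG) ≌
      ObjectProperty.FullSubcategory
        (fun G : ℕ ⥤ FGModuleCat k => IsFiltered.IsEventuallyConstant G) :=
  CategoryTheory.Equivalence.mk
    (ObjectProperty.lift _ toPersistenceFunctor fun M =>
      isEventuallyConstant_toPersistence M.property)
    (ObjectProperty.lift _ (ObjectProperty.ι _ ⋙ ofPersistence) fun G =>
      fg_ofPersistence G.property)
    (NatIso.ofComponents
      (fun M => ObjectProperty.isoMk _ (isoOfPersistenceToPersistence M.obj _)) fun _ => rfl)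
    (NatIso.ofComponents
      (fun G => ObjectProperty.isoMk _ (toPersistenceOfPersistenceIso G.obj _)) fun _ => rfl)

end Persistence

end GrMod

namespace CategoryTheory

variable {J C D : Type*} [Category* J] [Category* C] [Category* D]

instance : ObjectProperty.IsClosedUnderIsomorphisms
    (fun F : J ⥤ C => IsFiltered.IsEventuallyConstant F) where
  of_iso e := fun ⟨i, hi⟩ => ⟨i, fun _ f => (NatIso.isIso_map_iff e f).mp (hi f)⟩

lemma isEventuallyConstant_comp_iff (F : J ⥤ C) (G : C ⥤ D) [G.ReflectsIsomorphisms] :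
    IsFiltered.IsEventuallyConstant (F ⋙ G) ↔ IsFiltered.IsEventuallyConstant F := by
  refine ⟨fun ⟨i, hi⟩ => ⟨i, fun _ f => ?_⟩, fun ⟨i, hi⟩ => ⟨i, fun _ f => ?_⟩⟩
  · have : IsIso (G.map (F.map f)) := hi f
    exact isIso_of_reflects_iso _ G
  · have := hi f
    exact inferInstanceAs (IsIso (G.map (F.map f)))

lemma isEventuallyConstant_iff_forall_flip_obj [IsFiltered J] {X : Type*} [Category* X]
    [Finite X] (F : J ⥤ X ⥤ C) :
    IsFiltered.IsEventuallyConstant F ↔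
      ∀ x, IsFiltered.IsEventuallyConstant (F.flip.obj x) := by
  refine ⟨fun ⟨i, hi⟩ x => ⟨i, fun _ f => ?_⟩, fun h => ?_⟩
  · have := hi f
    exact inferInstanceAs (IsIso ((F.map f).app x))
  · choose i hi using fun x => (h x).exists_isEventuallyConstantFrom
    obtain ⟨i₀, hi₀⟩ := IsFiltered.sup_objs_exists (Set.finite_range i).toFinset
    refine ⟨i₀, fun _ f => ?_⟩
    have (x : X) : IsIso ((F.map f).app x) :=
      (hi x).postcomp (hi₀ ((Set.finite_range i).mem_toFinset.mpr ⟨x, rfl⟩)).some f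
    exact NatIso.isIso_of_isIso_app _

def ObjectProperty.functorToFullSubcategoryEquiv (P : ObjectProperty C) (X : Type*)
    [Category* X] :
    ObjectProperty.FullSubcategory (fun F : X ⥤ C => ∀ x, P (F.obj x)) ≌
      (X ⥤ P.FullSubcategory) :=
  CategoryTheory.Equivalence.mk
    { obj F := P.lift F.obj F.property
      map η :=
        { app x := ObjectProperty.homMk (η.hom.app x)
          naturality _ _ f := ObjectProperty.hom_ext _ (η.hom.naturality f) } }
    (ObjectProperty.lift _ ((Functor.whiskeringRight X _ C).obj P.ι) fun G x =>
      (G.obj x).property)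
    (NatIso.ofComponents (fun _ => Iso.refl _))
    (NatIso.ofComponents (fun _ => Iso.refl _))

end CategoryTheory

lemma finiteTypeShv_iff_isEventuallyConstant (X : Type) [PartialOrder X]
    (F : ℕ ⥤ (X ⥤ FGModuleCat k)) :
    FiniteTypeShv X F ↔ IsFiltered.IsEventuallyConstant F :=
  ⟨fun ⟨m, hm⟩ => ⟨m, fun j f => hm m j (leOfHom f) le_rfl⟩,
    fun ⟨m, hm⟩ => ⟨m, fun _ _ h hi => hm.isIso_map h.hom (homOfLE hi)⟩⟩

/-- On a finite poset `X`, the category of persistent sheaves of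
finite type (functors `ℕ ⥤ Shv(X, vec)` of finite type) is equivalent to the category
of sheaves on `X` valued in finitely generated `ℕ`-graded `k[t]`-modules. -/
theorem persistent_sheaf_equiv_graded_sheaf (k : Type) [Field k]
    (X : Type) [PartialOrder X] [Fintype X] :
    Nonempty ((ObjectProperty.FullSubcategory (fun F : ℕ ⥤ (X ⥤ FGModuleCat k) => FiniteTypeShv X F)) ≌
      (X ⥤ ObjectProperty.FullSubcategory (fun M : GrMod k => M.FG))) := by
  -- `FGModuleCat k` here lives in an arbitrary universe, the pieces of `GrMod k` in `Type`
  let changeUniverse :=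
    ((FGModuleCat.ulift.{0} k).asEquivalence.symm.congrRight (E := X)).congrRight (E := ℕ)
  have hUniverse : ObjectProperty.inverseImage (fun F => IsFiltered.IsEventuallyConstant F)
      changeUniverse.functor = fun F => FiniteTypeShv X F := by
    ext F
    exact (isEventuallyConstant_comp_iff F _).trans
      (finiteTypeShv_iff_isEventuallyConstant X F).symm
  have hFlip : ObjectProperty.inverseImage (fun F => IsFiltered.IsEventuallyConstant F)
      (Functor.flipping (C := ℕ) (D := X) (E := FGModuleCat.{0} k)).symm.functor =
        fun G => ∀ x, IsFiltered.IsEventuallyConstant (G.obj x) := by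
    ext G
    exact isEventuallyConstant_iff_forall_flip_obj G.flip
  exact ⟨(changeUniverse.congrFullSubcategory hUniverse).trans <|
    (Functor.flipping.symm.congrFullSubcategory hFlip).symm.trans <|
    (ObjectProperty.functorToFullSubcategoryEquiv _ X).trans
      GrMod.fgEquivIsEventuallyConstant.symm.congrRight⟩
end

section
/- Let X be a zigzag poset and ι : X' ↪ X the inclusion of the alternating subposet. Then the pullback (restriction) functor ι* on sheaves of vector spaces preserves injective objects: the restriction of every injective sheaf on X is an injective sheaf on X'. -/
open CategoryTheory

/-! Zigzag posets.  A zigzag poset is a finite poset whose Hasse diagram is a path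
`x_0 — x_1 — ... — x_n` with arbitrarily oriented edges.  We encode the orientation
of the edge between `x_l` and `x_{l+1}` by `o l : Bool` (`true` means `x_l < x_{l+1}`),
and `x_i ≤ x_j` iff all the edges between them point from `x_i` towards `x_j`. -/

/-- The order relation of the zigzag poset with edge orientations `o`. -/
def zigzagLE (o : ℕ → Bool) (i j : ℕ) : Prop :=
  (i ≤ j ∧ ∀ l, i ≤ l → l < j → o l = true) ∨
  (j ≤ i ∧ ∀ l, j ≤ l → l < i → o l = false)

theorem zigzagLE_refl (o : ℕ → Bool) (i : ℕ) : zigzagLE o i i :=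
  Or.inl ⟨le_rfl, fun _ h1 h2 => absurd (lt_of_le_of_lt h1 h2) (lt_irrefl _)⟩

theorem zigzagLE_trans (o : ℕ → Bool) (i j l : ℕ)
    (h1 : zigzagLE o i j) (h2 : zigzagLE o j l) : zigzagLE o i l := by
  rcases h1 with ⟨hij, hup1⟩ | ⟨hji, hdn1⟩ <;> rcases h2 with ⟨hjl, hup2⟩ | ⟨hlj, hdn2⟩
  · refine Or.inl ⟨le_trans hij hjl, fun m hm1 hm2 => ?_⟩
    rcases Nat.lt_or_ge m j with h | h
    · exact hup1 m hm1 h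
    · exact hup2 m h hm2
  · rcases le_or_gt i l with h | h
    · exact Or.inl ⟨h, fun m hm1 hm2 => hup1 m hm1 (lt_of_lt_of_le hm2 hlj)⟩
    · exact Or.inr ⟨le_of_lt h, fun m hm1 hm2 => hdn2 m hm1 (lt_of_lt_of_le hm2 hij)⟩
  · rcases le_or_gt i l with h | h
    · exact Or.inl ⟨h, fun m hm1 hm2 => hup2 m (le_trans hji hm1) hm2⟩
    · exact Or.inr ⟨le_of_lt h, fun m hm1 hm2 => hdn1 m (le_trans hjl hm1) hm2⟩
  · refine Or.inr ⟨le_trans hlj hji, fun m hm1 hm2 => ?_⟩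
    rcases Nat.lt_or_ge m j with h | h
    · exact hdn2 m hm1 h
    · exact hdn1 m h hm2

theorem zigzagLE_antisymm (o : ℕ → Bool) (i j : ℕ)
    (h1 : zigzagLE o i j) (h2 : zigzagLE o j i) : i = j := by
  rcases h1 with ⟨hij, hup1⟩ | ⟨hji, hdn1⟩ <;>
    rcases h2 with ⟨hji', hup2⟩ | ⟨hij', hdn2⟩
  · omega
  · rcases Nat.lt_or_ge i j with h | h
    · have ht := hup1 i le_rfl h
      have hf := hdn2 i le_rfl h
      simp [ht] at hf
    · omega
  · rcases Nat.lt_or_ge j i with h | h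
    · have ht := hup2 j le_rfl h
      have hf := hdn1 j le_rfl h
      simp [ht] at hf
    · omega
  · omega

/-- The zigzag poset on `{x_0, ..., x_n}` with edge orientations `o`. -/
def Zigzag (n : ℕ) (o : ℕ → Bool) : Type := Fin (n + 1)

instance (n : ℕ) (o : ℕ → Bool) : PartialOrder (Zigzag n o) where
  le i j := zigzagLE o (Fin.val i) (Fin.val j)
  le_refl i := zigzagLE_refl o _
  le_trans i j l := zigzagLE_trans o _ _ _
  le_antisymm i j h1 h2 := Fin.ext (zigzagLE_antisymm o _ _ h1 h2)

/-- The index of a point of the zigzag poset. -/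
def Zigzag.idx {n : ℕ} {o : ℕ → Bool} (x : Zigzag n o) : ℕ := Fin.val x

/-- The alternating subposet `X' ⊆ X`: all minimal elements together with the
internal maximal elements (the maximal elements flanked by minimal elements on
both sides); this is the alternating sequence of minimal and internal maximal
elements of the zigzag. -/
def altSet (n : ℕ) (o : ℕ → Bool) : Set (Zigzag n o) :=
  {x | IsMin x ∨ (IsMax x ∧ (∃ y : Zigzag n o, IsMin y ∧ y.idx < x.idx) ∧
    (∃ y : Zigzag n o, IsMin y ∧ x.idx < y.idx))}

/-- The alternating subposet, with the induced order. -/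
def AltSub (n : ℕ) (o : ℕ → Bool) : Type := {x : Zigzag n o // x ∈ altSet n o}

instance (n : ℕ) (o : ℕ → Bool) : PartialOrder (AltSub n o) :=
  inferInstanceAs (PartialOrder {x : Zigzag n o // x ∈ altSet n o})

/-- The inclusion `ι : X' ↪ X` is order preserving. -/
lemma altIncl_monotone (n : ℕ) (o : ℕ → Bool) :
    Monotone (fun x : AltSub n o => (x.val : Zigzag n o)) := fun _ _ h => h

/-- The restriction (pullback) functor `ι*` of sheaves along the inclusion of the
alternating subposet. -/
noncomputable def restrictAlt (n : ℕ) (o : ℕ → Bool) (C : Type*) [Category C] :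
    (Zigzag n o ⥤ C) ⥤ (AltSub n o ⥤ C) :=
  (Functor.whiskeringLeft (AltSub n o) (Zigzag n o) C).obj (altIncl_monotone n o).functor

/-! The inclusion `ι : X' ↪ X` has a right adjoint `x ↦ max {y ∈ X' | y ≤ x}`, so `ι*` is right
adjoint to the pullback along it, which preserves monomorphisms; hence `ι*` preserves injectives.
The greatest element of `X'` below `x ∉ X'` is the unique minimal element below `x`: two minimal
elements below `x` on the same side of `x` coincide because intervals of the path are convex, and
minimal elements on both sides would make `x` an internal maximum. -/

namespace CategoryTheory

open Limits

instance Functor.preservesMonomorphisms_whiskeringLeft_obj {A B C : Type*} [Category A]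
    [Category B] [Category C] [HasPullbacks C] (Φ : A ⥤ B) :
    ((Functor.whiskeringLeft A B C).obj Φ).PreservesMonomorphisms where
  preserves f hf := by
    rw [NatTrans.mono_iff_mono_app] at hf ⊢
    exact fun a => hf (Φ.obj a)

theorem Adjunction.preservesInjectiveObjects_whiskeringLeft_obj {A B : Type*} [Category A]
    [Category B] (C : Type*) [Category C] [HasPullbacks C] {L : A ⥤ B} {R : B ⥤ A}
    (adj : L ⊣ R) : ((Functor.whiskeringLeft A B C).obj L).PreservesInjectiveObjects :=
  Functor.preservesInjectiveObjects_of_adjunction_of_preservesMonomorphisms (adj.whiskerLeft C)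

end CategoryTheory

theorem exists_galoisConnection_subtypeVal {P : Type*} [Preorder P] {S : Set P}
    (h : ∀ x : P, ∃ m : S, IsGreatest {s : S | (s : P) ≤ x} m) :
    ∃ u : P → S, GaloisConnection Subtype.val u := by
  choose u hu using h
  exact ⟨u, fun s x => ⟨fun hsx => (hu x).2 hsx, fun hsu => le_trans hsu (hu x).1⟩⟩

namespace Zigzag

variable {n : ℕ} {o : ℕ → Bool}

instance : Finite (Zigzag n o) := inferInstanceAs (Finite (Fin (n + 1)))

theorem idx_injective : Function.Injective (idx : Zigzag n o → ℕ) := fun _ _ => Fin.ext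

theorem le_iff {x y : Zigzag n o} : x ≤ y ↔ zigzagLE o x.idx y.idx := Iff.rfl

theorem le_and_le_of_idx_between {a b c : Zigzag n o} (hac : a ≤ c)
    (h₁ : min a.idx c.idx ≤ b.idx) (h₂ : b.idx ≤ max a.idx c.idx) : a ≤ b ∧ b ≤ c := by
  simp only [le_iff, zigzagLE] at hac ⊢
  rcases hac with ⟨hle, hup⟩ | ⟨hle, hdown⟩
  · exact ⟨.inl ⟨by omega, fun l hl₁ hl₂ => hup l hl₁ (by omega)⟩,
      .inl ⟨by omega, fun l hl₁ hl₂ => hup l (by omega) hl₂⟩⟩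
  · exact ⟨.inr ⟨by omega, fun l hl₁ hl₂ => hdown l (by omega) hl₂⟩,
      .inr ⟨by omega, fun l hl₁ hl₂ => hdown l hl₁ (by omega)⟩⟩

theorem eq_of_isMin_of_idx_between {a b c : Zigzag n o} (hb : IsMin b) (hac : a ≤ c)
    (h₁ : min a.idx c.idx ≤ b.idx) (h₂ : b.idx ≤ max a.idx c.idx) : a = b :=
  have hab := (le_and_le_of_idx_between hac h₁ h₂).1
  le_antisymm hab (hb hab)

theorem idx_between_of_le_of_le {x y w : Zigzag n o} (hyx : y ≤ x) (hxw : x ≤ w) (hy : y ≠ x)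
    (hw : w ≠ x) : y.idx < x.idx ∧ x.idx < w.idx ∨ w.idx < x.idx ∧ x.idx < y.idx := by
  have hy' : y.idx ≠ x.idx := fun h => hy (idx_injective h)
  have hw' : w.idx ≠ x.idx := fun h => hw (idx_injective h)
  by_cases hyb : min x.idx w.idx ≤ y.idx ∧ y.idx ≤ max x.idx w.idx
  · exact absurd (le_antisymm hyx (le_and_le_of_idx_between hxw hyb.1 hyb.2).1) hy
  by_cases hwb : min y.idx x.idx ≤ w.idx ∧ w.idx ≤ max y.idx x.idx
  · exact absurd (le_antisymm (le_and_le_of_idx_between hyx hwb.1 hwb.2).2 hxw) hw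
  omega

theorem isMin_of_mem_altSet_of_le {s x : Zigzag n o} (hs : s ∈ altSet n o) (hsx : s ≤ x)
    (hx : x ∉ altSet n o) : IsMin s := by
  by_contra hmin
  exact hx (le_antisymm hsx ((hs.resolve_left hmin).1 hsx) ▸ hs)

theorem isMax_of_below_on_both_sides {x z m : Zigzag n o} (hzx : z ≤ x) (hmx : m ≤ x)
    (hz : z.idx < x.idx) (hm : x.idx < m.idx) : IsMax x := by
  intro w hxw
  by_contra hwx
  have hw : w ≠ x := fun h => hwx (h ▸ le_rfl)
  have hz' := idx_between_of_le_of_le hzx hxw (fun h => by subst h; omega) hw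
  have hm' := idx_between_of_le_of_le hmx hxw (fun h => by subst h; omega) hw
  omega

theorem eq_of_isMin_le_of_isMin_le {x z m : Zigzag n o} (hx : x ∉ altSet n o) (hz : IsMin z)
    (hzx : z ≤ x) (hm : IsMin m) (hmx : m ≤ x) : z = m := by
  by_cases hmb : min z.idx x.idx ≤ m.idx ∧ m.idx ≤ max z.idx x.idx
  · exact eq_of_isMin_of_idx_between hm hzx hmb.1 hmb.2
  by_cases hzb : min m.idx x.idx ≤ z.idx ∧ z.idx ≤ max m.idx x.idx
  · exact (eq_of_isMin_of_idx_between hz hmx hzb.1 hzb.2).symm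
  exfalso
  rcases Nat.lt_or_gt_of_ne (show z.idx ≠ x.idx by omega) with hzlt | hzgt
  · exact hx (.inr ⟨isMax_of_below_on_both_sides hzx hmx hzlt (by omega),
      ⟨z, hz, hzlt⟩, ⟨m, hm, by omega⟩⟩)
  · exact hx (.inr ⟨isMax_of_below_on_both_sides hmx hzx (by omega) hzgt,
      ⟨m, hm, by omega⟩, ⟨z, hz, hzgt⟩⟩)

theorem exists_isGreatest_altSet_le (x : Zigzag n o) :
    ∃ m : altSet n o, IsGreatest {s : altSet n o | (s : Zigzag n o) ≤ x} m := by
  by_cases hx : x ∈ altSet n o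
  · exact ⟨⟨x, hx⟩, le_refl x, fun _ hs => hs⟩
  obtain ⟨m, hmx, hm⟩ := exists_minimal_le_of_wellFoundedLT (fun _ : Zigzag n o => True) x trivial
  have hm : IsMin m := fun y hy => hm.2 trivial hy
  refine ⟨⟨m, .inl hm⟩, hmx, fun s hsx => ?_⟩
  exact (eq_of_isMin_le_of_isMin_le hx (isMin_of_mem_altSet_of_le s.2 hsx hx) hsx hm hmx).le

end Zigzag

/-- Let `X` be a zigzag poset and `ι : X' ↪ X` the inclusion of the
alternating subposet.  Then the pullback (restriction) functor `ι*` on sheaves of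
vector spaces preserves injective objects: the restriction of every injective sheaf
on `X` is an injective sheaf on `X'`. -/
theorem restrictAlt_preserves_injectives (k : Type) [Field k] (n : ℕ) (o : ℕ → Bool)
    (F : Zigzag n o ⥤ ModuleCat k) (hF : Injective F) :
    Injective ((restrictAlt n o (ModuleCat k)).obj F) := by
  obtain ⟨_, gc⟩ := exists_galoisConnection_subtypeVal Zigzag.exists_isGreatest_altSet_le
  exact (gc.adjunction.preservesInjectiveObjects_whiskeringLeft_obj _).injective_obj hF
end
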